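/- arXiv:2010.12490 — 3 statements merged into one kernel-verified Lean document; each statement's English description precedes it below -/
import Mathlib

section
/- For a group K with trivial center and an automorphism θ : K → K, the following are equivalent for the mapping torus Γ_θ = K ⋊_θ ℤ: (i) C(Γ_θ) ≠ 1; (ii) θᵐ is an inner automorphism of K for some nonzero integer m. -/
open SemidirectProduct

abbrev MappingTorus (K : Type*) [Group K] (θ : MulAut K) :=
  K ⋊[zpowersHom (MulAut K) θ] Multiplicative ℤ

/-!
An element `(β, t^m)` of `K ⋊_θ ℤ` is central exactly when `θ^m` is conjugation by `β` and `θ`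
fixes `β`. For `m = 0` this forces `β` to be central in `K`, hence trivial. Conversely, if
`θ^m` is conjugation by `β`, then `θ` commutes with `θ^m`, so conjugation by `θ β` equals
conjugation by `β`; as `K` has trivial center, `θ β = β`, and `(β, t^m)` is a nontrivial
central element.
-/

namespace SemidirectProduct

variable {N G : Type*} [Group N] [Group G] {φ : G →* MulAut N}

theorem mem_center_iff {x : N ⋊[φ] G} :
    x ∈ Subgroup.center (N ⋊[φ] G) ↔
      (∀ a : N, φ x.right a = x.left⁻¹ * a * x.left) ∧ (∀ g : G, φ g x.left = x.left) ∧
        x.right ∈ Subgroup.center G := by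
  rcases x with ⟨n, g⟩
  simp only [Subgroup.mem_center_iff, SemidirectProduct.ext_iff, mul_left, mul_right]
  constructor
  · intro h
    refine ⟨fun a => ?_, fun k => ?_, fun k => ?_⟩
    · have := (h ⟨a, 1⟩).1
      simp only [map_one, MulAut.one_apply] at this
      rw [mul_assoc, this, inv_mul_cancel_left]
    · simpa using (h ⟨1, k⟩).1
    · exact (h ⟨1, k⟩).2
  · rintro ⟨hconj, hfix, hg⟩ ⟨a, k⟩
    refine ⟨?_, hg k⟩
    simp only [hconj, hfix]
    group

end SemidirectProduct

section TrivialCenter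

variable {K : Type*} [Group K]

theorem eq_of_forall_conj_eq (hK : Subgroup.center K = ⊥) {a b : K}
    (h : ∀ x : K, a⁻¹ * x * a = b⁻¹ * x * b) : a = b := by
  have hc : a * b⁻¹ ∈ Subgroup.center K := Subgroup.mem_center_iff.mpr fun x => by
    calc x * (a * b⁻¹) = a * (a⁻¹ * x * a) * b⁻¹ := by group
      _ = a * b⁻¹ * x := by rw [h]; group
  rw [hK, Subgroup.mem_bot] at hc
  exact mul_inv_eq_one.mp hc

theorem MulAut.apply_eq_of_commute_conj (hK : Subgroup.center K = ⊥) {θ ψ : MulAut K}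
    (hθψ : Commute θ ψ) {β : K} (hψ : ∀ α : K, ψ α = β⁻¹ * α * β) : θ β = β := by
  refine eq_of_forall_conj_eq hK fun x => ?_
  obtain ⟨α, rfl⟩ := θ.surjective x
  calc (θ β)⁻¹ * θ α * θ β = θ (ψ α) := by simp [hψ]
    _ = ψ (θ α) := DFunLike.congr_fun hθψ α
    _ = β⁻¹ * θ α * β := hψ _

end TrivialCenter

/-- For K with trivial center: the center of Γ_θ = K ⋊_θ ℤ is nontrivial iff
θ^m is an inner automorphism of K for some nonzero integer m. -/
theorem stmt6 {K : Type*} [Group K] (hK : Subgroup.center K = ⊥) (θ : MulAut K) :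
    Subgroup.center (MappingTorus K θ) ≠ ⊥ ↔
      ∃ m : ℤ, m ≠ 0 ∧ ∃ β : K, ∀ α : K, (θ ^ m) α = β⁻¹ * α * β := by
  simp only [ne_eq, Subgroup.eq_bot_iff_forall, not_forall, exists_prop,
    SemidirectProduct.mem_center_iff, zpowersHom_apply]
  constructor
  · rintro ⟨⟨β, n⟩, ⟨hconj, -, -⟩, hne⟩
    refine ⟨n.toAdd, fun hn => hne ?_, β, hconj⟩
    have hβ : β = 1 := eq_of_forall_conj_eq hK fun α => by simpa [hn] using (hconj α).symm
    ext <;> simp [hβ, toAdd_eq_zero.mp hn]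
  · rintro ⟨m, hm, β, hβ⟩
    have hfix : θ β = β := MulAut.apply_eq_of_commute_conj hK (Commute.self_zpow θ m) hβ
    refine ⟨⟨β, .ofAdd m⟩, ⟨hβ, fun k => ?_, Subgroup.mem_center_iff.mpr fun _ => mul_comm _ _⟩,
      fun h => hm (by simpa using congrArg SemidirectProduct.right h)⟩
    exact (MulAction.stabilizer (MulAut K) β).zpow_mem (show θ ∈ _ from hfix) _
end

section
/- If K is a finitely generated, torsion-free, residually finite group and θ : K → K is an automorphism, then every endomorphism of Γ_θ = K ⋊_θ ℤ whose image has finite index in Γ_θ is injective. -/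
open SemidirectProduct

/-- A monoid is torsion-free if no nontrivial element has finite order
(definition removed from Mathlib; restored here with its old meaning). -/
def Monoid.IsTorsionFree (G : Type*) [Monoid G] : Prop :=
  ∀ g : G, g ≠ 1 → ¬IsOfFinOrder g

/-- G is residually finite if every nontrivial element survives in some finite quotient. -/
def ResiduallyFinite (G : Type*) [Group G] : Prop :=
  ∀ g : G, g ≠ 1 → ∃ (H : Type) (_ : Group H) (_ : Finite H) (f : G →* H), f g ≠ 1

/-!
Hirshon's argument. For `φ : G →* G` with `[G : φ G]` finite, the subgroups `φⁿ G` form a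
descending chain of finite-index subgroups, and `[ker φ : ker φ ⊓ φⁿ G]` is bounded by
`[G : φ G]`; at an `n₀` where it is maximal, `ker φ ⊓ φ^n₀ G` lies in every `φⁿ G`. An element
of `ker φ` lying in every `φⁿ G` dies in every finite quotient `G / N`: two of the maps
`G → G / N, x ↦ φⁿ x` coincide because there are finitely many homomorphisms `G →* G / N`
(Mal'cev's pigeonhole). In a residually finite group it is therefore trivial. Since every
element of `ker φ` has a power in `φ^n₀ G`, the kernel of `φ` is a torsion subgroup.

The mapping torus `K ⋊_θ ℤ` inherits finite generation, torsion-freeness and residual finiteness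
from `K`; for the last, an element of `K` outside a characteristic finite-index `M ≤ K` is
detected by the action of `K ⋊_θ ℤ` on `K / M`.
-/

instance MonoidHom.finite_of_fg {G F : Type*} [Group G] [Group F] [Group.FG G] [Finite F] :
    Finite (G →* F) := by
  obtain ⟨S, hS, hSfin⟩ := Group.fg_iff.mp ‹Group.FG G›
  have := hSfin.to_subtype
  exact Finite.of_injective (fun f : G →* F => fun s : S => f s) fun f g hfg =>
    MonoidHom.eq_of_eqOn_dense hS fun s hs => congrFun hfg ⟨s, hs⟩

namespace MonoidHom

variable {G : Type*} [Group G] (φ : G →* G)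

def iterateRange (n : ℕ) : Subgroup G := (Subgroup.map φ)^[n] ⊤

theorem iterateRange_succ (n : ℕ) : φ.iterateRange (n + 1) = (φ.iterateRange n).map φ :=
  Function.iterate_succ_apply' _ _ _

theorem mem_iterateRange {n : ℕ} {x : G} : x ∈ φ.iterateRange n ↔ ∃ y, φ^[n] y = x := by
  induction n generalizing x with
  | zero => simp [iterateRange]
  | succ n ih => simp [iterateRange_succ, ih, Function.iterate_succ_apply']

theorem iterateRange_antitone : Antitone φ.iterateRange := by
  refine antitone_nat_of_succ_le fun n x hx => ?_
  obtain ⟨y, rfl⟩ := φ.mem_iterateRange.mp hx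
  exact φ.mem_iterateRange.mpr ⟨φ y, (Function.iterate_succ_apply _ _ _).symm⟩

theorem finiteIndex_iterateRange [φ.range.FiniteIndex] (n : ℕ) :
    (φ.iterateRange n).FiniteIndex := by
  induction n with
  | zero => exact ⟨by simp [iterateRange]⟩
  | succ n ih =>
    have := Subgroup.finiteIndex_of_le (le_sup_left : φ.iterateRange n ≤ _ ⊔ φ.ker)
    rw [iterateRange_succ, Subgroup.finiteIndex_iff, Subgroup.index_map]
    exact mul_ne_zero Subgroup.FiniteIndex.index_ne_zero Subgroup.FiniteIndex.index_ne_zero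

/-- Modulo an invariant subgroup `H` of finite index, the kernel injects into `(H ⊔ ker φ) / H`,
whose size is the factor by which the index drops from `[G : φ H]` to `[G : H]`. -/
theorem relIndex_ker_le_index_range [φ.range.FiniteIndex] {H : Subgroup G}
    [H.FiniteIndex] (hH : H.map φ ≤ H) :
    H.relIndex φ.ker ≤ φ.range.index := by
  have := Subgroup.finiteIndex_of_le (le_sup_left : H ≤ H ⊔ φ.ker)
  have : (H.map φ).FiniteIndex := by
    rw [Subgroup.finiteIndex_iff, Subgroup.index_map]
    exact mul_ne_zero Subgroup.FiniteIndex.index_ne_zero Subgroup.FiniteIndex.index_ne_zero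
  have hgrow : (H ⊔ φ.ker).index * H.relIndex (H ⊔ φ.ker) ≤
      (H ⊔ φ.ker).index * φ.range.index := by
    rw [mul_comm, Subgroup.relIndex_mul_index le_sup_left, ← Subgroup.index_map]
    exact Subgroup.index_antitone hH
  calc H.relIndex φ.ker ≤ H.relIndex (H ⊔ φ.ker) :=
        Subgroup.relIndex_le_of_le_right le_sup_right
          Subgroup.isFiniteRelIndex_of_finiteIndex.relIndex_ne_zero
    _ ≤ φ.range.index :=
        Nat.le_of_mul_le_mul_left hgrow (Nat.pos_of_ne_zero Subgroup.FiniteIndex.index_ne_zero)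

theorem exists_forall_inf_ker_le_iterateRange [φ.range.FiniteIndex] :
    ∃ n₀, ∀ n, φ.iterateRange n₀ ⊓ φ.ker ≤ φ.iterateRange n := by
  have := φ.finiteIndex_iterateRange
  set v : ℕ → ℕ := fun n => (φ.iterateRange n).relIndex φ.ker
  have hbdd : BddAbove (Set.range v) := ⟨_, Set.forall_mem_range.mpr fun n =>
    φ.relIndex_ker_le_index_range <| by
      rw [← iterateRange_succ]
      exact φ.iterateRange_antitone n.le_succ⟩
  obtain ⟨n₀, hn₀⟩ := Nat.sSup_mem (Set.range_nonempty v) hbdd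
  refine ⟨n₀, fun n => ?_⟩
  rcases le_total n n₀ with hn | hn
  · exact inf_le_left.trans (φ.iterateRange_antitone hn)
  · have htower : (φ.iterateRange n).relIndex (φ.iterateRange n₀ ⊓ φ.ker) * v n₀ = v n := by
      rw [Subgroup.relIndex_inf_mul_relIndex, inf_eq_left.mpr (φ.iterateRange_antitone hn)]
    have hmax : v n ≤ v n₀ := hn₀ ▸ le_csSup hbdd ⟨n, rfl⟩
    have hv : v n₀ ≠ 0 := Subgroup.isFiniteRelIndex_of_finiteIndex.relIndex_ne_zero
    have hv' : v n ≠ 0 := Subgroup.isFiniteRelIndex_of_finiteIndex.relIndex_ne_zero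
    rw [← Subgroup.relIndex_eq_one]
    refine le_antisymm ?_ (Nat.pos_of_ne_zero fun h0 => hv' (by rw [← htower, h0, zero_mul]))
    by_contra! h2
    nlinarith [Nat.pos_of_ne_zero hv]

theorem eq_one_of_mem_ker_of_forall_mem_iterateRange [Group.FG G] [Group.ResiduallyFinite G]
    {g : G} (hg : φ g = 1) (hmem : ∀ n, g ∈ φ.iterateRange n) : g = 1 := by
  by_contra hne
  obtain ⟨N, hN⟩ := Group.exists_finiteIndexNormalSubgroup_notMem g hne
  let π := QuotientGroup.mk' N.toSubgroup
  let ψ : Monoid.End G := φ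
  obtain ⟨a, b, hab, hπ⟩ := Finite.exists_ne_map_eq_of_infinite fun n => π.comp (ψ ^ n)
  wlog hlt : a < b generalizing a b
  · exact this b a hab.symm hπ.symm (hab.lt_or_gt.resolve_left hlt)
  obtain ⟨x, rfl⟩ := φ.mem_iterateRange.mp (hmem a)
  obtain ⟨k, rfl⟩ := Nat.exists_eq_add_of_lt hlt
  have hx := DFunLike.congr_fun hπ x
  change π (φ^[a] x) = π (φ^[a + k + 1] x) at hx
  rw [show a + k + 1 = k + 1 + a by omega, Function.iterate_add_apply,
    Function.iterate_succ_apply, hg, iterate_map_one] at hx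
  exact hN ((QuotientGroup.eq_one_iff _).mp hx)

theorem injective_of_finiteIndex_range [Group.FG G] [Group.ResiduallyFinite G]
    (htf : Monoid.IsTorsionFree G) [φ.range.FiniteIndex] : Function.Injective φ := by
  obtain ⟨n₀, hn₀⟩ := φ.exists_forall_inf_ker_le_iterateRange
  have := φ.finiteIndex_iterateRange n₀
  refine (injective_iff_map_eq_one φ).mpr fun g hg => by_contra fun hne => ?_
  obtain ⟨k, hk, -, hgk⟩ :=
    Subgroup.exists_pow_mem_of_index_ne_zero (H := φ.iterateRange n₀)
      Subgroup.FiniteIndex.index_ne_zero g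
  have hker : g ^ k ∈ φ.ker := by rw [MonoidHom.mem_ker, map_pow, hg, one_pow]
  have hgk_one : g ^ k = 1 :=
    φ.eq_one_of_mem_ker_of_forall_mem_iterateRange hker fun n => hn₀ n ⟨hgk, hker⟩
  exact htf g hne (isOfFinOrder_iff_pow_eq_one.mpr ⟨k, hk, hgk_one⟩)

end MonoidHom

/-- The subgroup `⋂ ker q` over all `q : N →* N ⧸ K` is permuted by automorphisms, so it is
characteristic, and it has finite index because there are finitely many such `q`. -/
theorem Group.exists_characteristic_finiteIndex_notMem {N : Type*} [Group N] [Group.FG N]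
    [Group.ResiduallyFinite N] {n : N} (hn : n ≠ 1) :
    ∃ M : Subgroup N, M.Characteristic ∧ M.FiniteIndex ∧ n ∉ M := by
  obtain ⟨K, hK⟩ := Group.exists_finiteIndexNormalSubgroup_notMem n hn
  refine ⟨⨅ q : N →* N ⧸ K.toSubgroup, q.ker, ?_,
    Subgroup.finiteIndex_iInf fun q => Subgroup.finiteIndex_ker q, ?_⟩
  · exact Subgroup.characteristic_iff_le_comap.mpr fun σ x hx =>
      Subgroup.mem_iInf.mpr fun q => Subgroup.mem_iInf.mp hx (q.comp σ.toMonoidHom)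
  · intro hM
    exact hK ((QuotientGroup.eq_one_iff n).mp (Subgroup.mem_iInf.mp hM (QuotientGroup.mk' _)))

namespace MulAut

variable {N : Type*} [Group N] (M : Subgroup N) [M.Characteristic]

def quotientPermHom : MulAut N →* Equiv.Perm (N ⧸ M) where
  toFun σ := (QuotientGroup.congr M M σ (Subgroup.characteristic_iff_map_eq.mp ‹_› σ)).toEquiv
  map_one' := by
    ext q
    induction q using QuotientGroup.induction_on
    rfl
  map_mul' σ τ := by
    ext q
    induction q using QuotientGroup.induction_on
    rfl

end MulAut

namespace SemidirectProduct

variable {N G : Type*} [Group N] [Group G] {φ : G →* MulAut N}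

instance [Group.FG N] [Group.FG G] : Group.FG (N ⋊[φ] G) := by
  have hsup : (inl.range ⊔ inr.range : Subgroup (N ⋊[φ] G)) = ⊤ :=
    eq_top_iff.mpr fun x _ => inl_left_mul_inr_right x ▸
      Subgroup.mul_mem _ (Subgroup.mem_sup_left ⟨_, rfl⟩) (Subgroup.mem_sup_right ⟨_, rfl⟩)
  rw [Group.fg_def, ← hsup]
  exact ((Group.fg_iff_subgroup_fg _).mp inferInstance).sup
    ((Group.fg_iff_subgroup_fg _).mp inferInstance)

theorem isTorsionFree (hN : Monoid.IsTorsionFree N) (hG : Monoid.IsTorsionFree G) :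
    Monoid.IsTorsionFree (N ⋊[φ] G) := by
  intro g hg hfin
  have hright : g.right = 1 := by
    by_contra h
    exact hG _ h (rightHom.isOfFinOrder hfin)
  have hinl : inl g.left = g := SemidirectProduct.ext rfl hright.symm
  refine hN g.left (fun h => hg ?_) (inl_injective.isOfFinOrder_iff.mp (hinl ▸ hfin))
  rw [← hinl, h, map_one]

variable (φ) (M : Subgroup N) [M.Characteristic]

def toPermQuotient : N ⋊[φ] G →* Equiv.Perm (N ⧸ M) :=
  lift (MulAction.toPermHom N (N ⧸ M)) ((MulAut.quotientPermHom M).comp φ) fun g => by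
    ext n q
    induction q using QuotientGroup.induction_on with | H x => ?_
    change ((φ g n * x : N) : N ⧸ M) = ((φ g (n * (φ g)⁻¹ x) : N) : N ⧸ M)
    rw [map_mul, MulAut.apply_inv_self]

theorem toPermQuotient_inl_one (n : N) : toPermQuotient φ M (inl n) 1 = (n : N ⧸ M) := by
  simp [toPermQuotient, ← QuotientGroup.mk_one, MulAction.Quotient.smul_mk]

variable {φ}

instance [Group.FG N] [Group.ResiduallyFinite N] [Group.ResiduallyFinite G] :
    Group.ResiduallyFinite (N ⋊[φ] G) := by
  rw [Group.residuallyFinite_iff_exists_finiteIndex]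
  intro g hg
  by_cases hright : g.right = 1
  · have hinl : inl g.left = g := SemidirectProduct.ext rfl hright.symm
    obtain ⟨M, _, _, hM⟩ := Group.exists_characteristic_finiteIndex_notMem
      (n := g.left) fun h => hg (by rw [← hinl, h, map_one])
    refine ⟨(toPermQuotient φ M).ker, Subgroup.finiteIndex_ker _, fun hker => hM ?_⟩
    have := congr($hker (1 : N ⧸ M))
    rw [← hinl, toPermQuotient_inl_one] at this
    exact (QuotientGroup.eq_one_iff _).mp this
  · obtain ⟨H, hH, hgH⟩ :=
      Group.residuallyFinite_iff_exists_finiteIndex.mp ‹_› g.right hright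
    refine ⟨H.comap rightHom, Subgroup.finiteIndex_iff.mpr ?_, hgH⟩
    rw [Subgroup.index_comap_of_surjective H rightHom_surjective]
    exact hH.index_ne_zero

end SemidirectProduct

instance Multiplicative.residuallyFinite_int : Group.ResiduallyFinite (Multiplicative ℤ) := by
  refine Group.residuallyFinite_of_forall_exists_finite_monoidHom.{0} fun x hx => ?_
  set m := x.toAdd.natAbs + 1
  refine ⟨Multiplicative (ZMod m), inferInstance, inferInstance,
    (Int.castAddHom (ZMod m)).toMultiplicative, fun h => hx ?_⟩
  have hdvd : (m : ℤ) ∣ x.toAdd :=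
    (ZMod.intCast_zmod_eq_zero_iff_dvd _ _).mp (congrArg Multiplicative.toAdd h)
  exact toAdd_eq_zero.mp (Int.eq_zero_of_dvd_of_natAbs_lt_natAbs hdvd (by omega))

/-- If K is finitely generated, torsion-free and residually finite, then every
endomorphism of Γ_θ = K ⋊_θ ℤ whose image has finite index is injective. -/
theorem stmt7 {K : Type*} [Group K] (hfg : Group.FG K)
    (htf : Monoid.IsTorsionFree K) (hrf : ResiduallyFinite K) (θ : MulAut K)
    (φ : MappingTorus K θ →* MappingTorus K θ) (h : φ.range.FiniteIndex) :
    Function.Injective φ := by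
  have : Group.ResiduallyFinite K := Group.residuallyFinite_of_forall_exists_finite_monoidHom hrf
  exact φ.injective_of_finiteIndex_range
    (SemidirectProduct.isTorsionFree htf fun _ => not_isOfFinOrder_of_isMulTorsionFree)
end

section
/- Let θ : K → K be an automorphism of a group K such that θᵐ is an inner automorphism, realized by conjugation by β ∈ K, for some m > 0. Then the map φ : K ⋊_θ ℤ → K ⋊_θ ℤ fixing K pointwise and sending t to β·t^{m+1} is a well-defined injective endomorphism whose image has index m+1. In particular, Γ_θ is not finitely co-Hopfian when m ≥ 1. -/
/-!
Conjugation by `x = β t^(m+1)` acts on `K` as `β θ^(m+1)(·) β⁻¹ = θ`, so the identity of `K`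
together with `t ↦ x` extends to an endomorphism `φ` of the mapping torus. It fixes the kernel `K`
pointwise and induces multiplication by `m + 1` on the quotient `ℤ`; hence `φ` is injective and its
image is the preimage of `(m+1)ℤ`, of index `m + 1`. For `m ≥ 1` this index is not `1`, so `φ` is
not onto.
-/

open SemidirectProduct

theorem Function.Semiconj.mulAut_zpow {G H : Type*} [Mul G] [Mul H] {f : G → H}
    {θ : MulAut G} {c : MulAut H} (h : Function.Semiconj f θ c) (k : ℤ) :
    Function.Semiconj f ⇑(θ ^ k) ⇑(c ^ k) := by
  induction k using Int.induction_on with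
  | zero => exact fun a => rfl
  | succ k ih =>
    intro a
    simp only [zpow_add_one, MulAut.mul_apply, h a, ih (θ a)]
  | pred k ih =>
    have h_inv : Function.Semiconj f ⇑θ⁻¹ ⇑c⁻¹ := fun a => by
      have h_a := h (θ⁻¹ a)
      rw [MulAut.apply_inv_self] at h_a
      rw [h_a, MulAut.inv_apply_self]
    intro a
    simp only [zpow_sub_one, MulAut.mul_apply, h_inv a, ih (θ⁻¹ a)]

lemma Multiplicative.index_range_powMonoidHom_int (n : ℕ) :
    (powMonoidHom n : Multiplicative ℤ →* Multiplicative ℤ).range.index = n := by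
  have hrange : (powMonoidHom n : Multiplicative ℤ →* Multiplicative ℤ).range =
      AddSubgroup.toSubgroup (nsmulAddMonoidHom (α := ℤ) n).range := by
    ext x; rfl
  rw [hrange, AddSubgroup.index_toSubgroup, Int.range_nsmulAddMonoidHom, Int.index_zmultiples,
    Int.natAbs_natCast]

namespace SemidirectProduct

variable {N G : Type*} [Group N] [Group G] {ϕ : G →* MulAut N}
  {φ : N ⋊[ϕ] G →* N ⋊[ϕ] G} {ρ : G →* G}

theorem injective_of_fixes_inl (hN : ∀ n, φ (inl n) = inl n)
    (hG : rightHom.comp φ = ρ.comp rightHom) (hρ : Function.Injective ρ) :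
    Function.Injective φ := by
  rw [injective_iff_map_eq_one]
  intro γ hγ
  have hright : γ.right = 1 := hρ <| by
    simpa [hγ] using (DFunLike.congr_fun hG γ).symm
  have hinl : γ = inl γ.left := by
    rw [← inl_left_mul_inr_right γ, hright, map_one, mul_one, left_inl]
  rw [hinl, hN] at hγ
  rw [hinl, (map_eq_one_iff _ inl_injective).mp hγ, map_one]

theorem range_eq_comap_of_fixes_inl (hN : ∀ n, φ (inl n) = inl n)
    (hG : rightHom.comp φ = ρ.comp rightHom) :
    φ.range = ρ.range.comap rightHom := by
  apply le_antisymm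
  · rintro _ ⟨γ, rfl⟩
    exact ⟨γ.right, (DFunLike.congr_fun hG γ).symm⟩
  · rintro γ ⟨g, hg⟩
    have hker : γ * (φ (inr g))⁻¹ ∈ (inl : N →* N ⋊[ϕ] G).range := by
      rw [range_inl_eq_ker_rightHom, MonoidHom.mem_ker, map_mul, map_inv,
        ← MonoidHom.comp_apply, hG]
      simp [hg]
    obtain ⟨n, hn⟩ := hker
    exact ⟨inl n * inr g, by rw [map_mul, hN, hn, inv_mul_cancel_right]⟩

theorem index_range_of_fixes_inl (hN : ∀ n, φ (inl n) = inl n)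
    (hG : rightHom.comp φ = ρ.comp rightHom) :
    φ.range.index = ρ.range.index := by
  rw [range_eq_comap_of_fixes_inl hN hG, Subgroup.index_comap_of_surjective _ rightHom_surjective]

end SemidirectProduct

namespace MappingTorus

variable {K : Type*} [Group K] {θ : MulAut K}

section lift

variable {H : Type*} [Group H] (f : K →* H) (x : H) (hx : ∀ α, f (θ α) = x * f α * x⁻¹)

def lift : MappingTorus K θ →* H :=
  SemidirectProduct.lift f (zpowersHom H x) fun g => MonoidHom.ext fun α => by
    have hconj : Function.Semiconj f θ (MulAut.conj x) := hx
    simpa using hconj.mulAut_zpow g.toAdd α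

@[simp]
theorem lift_inl (α : K) : lift f x hx (inl α) = f α :=
  SemidirectProduct.lift_inl ..

@[simp]
theorem lift_inr (g : Multiplicative ℤ) : lift f x hx (inr g) = x ^ g.toAdd :=
  SemidirectProduct.lift_inr ..

end lift

variable {m : ℕ} {β : K}

theorem inl_apply_eq_conj_of_pow_eq_conj (hinner : ∀ α : K, (θ ^ m) α = β⁻¹ * α * β)
    (α : K) :
    (inl (θ α) : MappingTorus K θ) =
      (inl β * inr (Multiplicative.ofAdd 1) ^ (m + 1)) * inl α *
        (inl β * inr (Multiplicative.ofAdd 1) ^ (m + 1))⁻¹ := by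
  have hθ : θ α = β * (θ ^ (m + 1)) α * β⁻¹ := by
    rw [pow_succ, MulAut.mul_apply, hinner]; group
  have ht : (inl ((θ ^ (m + 1)) α) : MappingTorus K θ) =
      inr (Multiplicative.ofAdd 1) ^ (m + 1) * inl α *
        (inr (Multiplicative.ofAdd 1) ^ (m + 1))⁻¹ := by
    rw [← map_pow, ← map_inv, ← inl_aut, map_pow, zpowersHom_apply, toAdd_ofAdd, zpow_one]
  rw [hθ, map_mul, map_mul, ht, map_inv]
  group

variable (θ m β) in
def endOfPowEqConj (hinner : ∀ α : K, (θ ^ m) α = β⁻¹ * α * β) :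
    MappingTorus K θ →* MappingTorus K θ :=
  lift inl _ (inl_apply_eq_conj_of_pow_eq_conj hinner)

theorem rightHom_comp_endOfPowEqConj (hinner : ∀ α : K, (θ ^ m) α = β⁻¹ * α * β) :
    rightHom.comp (endOfPowEqConj θ m β hinner) = (powMonoidHom (m + 1)).comp rightHom := by
  refine hom_ext (MonoidHom.ext fun α => ?_) (MonoidHom.ext_mint ?_)
  · simp [endOfPowEqConj]
  · simp only [MonoidHom.comp_apply, endOfPowEqConj, lift_inr, toAdd_ofAdd, zpow_one, map_mul,
      map_pow, rightHom_inl, rightHom_inr, one_mul, powMonoidHom_apply]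

end MappingTorus

/-- If θ^m is inner (conjugation by β) for some m > 0, then the map fixing K and
sending t to β·t^{m+1} is a well-defined injective endomorphism of Γ_θ with image of
index m+1; in particular Γ_θ is not finitely co-Hopfian. -/
theorem stmt9 {K : Type*} [Group K] (θ : MulAut K) (m : ℕ) (hm : 0 < m) (β : K)
    (hinner : ∀ α : K, (θ ^ m) α = β⁻¹ * α * β) :
    ∃ φ : MappingTorus K θ →* MappingTorus K θ,
      (∀ α : K, φ (inl α) = inl α) ∧
      φ (inr (Multiplicative.ofAdd 1)) =
        inl β * (inr (Multiplicative.ofAdd 1) : MappingTorus K θ) ^ (m + 1) ∧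
      Function.Injective φ ∧
      φ.range.index = m + 1 ∧
      ¬ (∀ ψ : MappingTorus K θ →* MappingTorus K θ,
          Function.Injective ψ → ψ.range.FiniteIndex → Function.Bijective ψ) := by
  set φ := MappingTorus.endOfPowEqConj θ m β hinner
  have hK : ∀ α : K, φ (inl α) = inl α := fun α => MappingTorus.lift_inl ..
  have hright := MappingTorus.rightHom_comp_endOfPowEqConj hinner
  have hinj : Function.Injective φ :=
    injective_of_fixes_inl hK hright (pow_left_injective m.succ_ne_zero)
  have hindex : φ.range.index = m + 1 := by
    rw [index_range_of_fixes_inl hK hright, Multiplicative.index_range_powMonoidHom_int]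
  refine ⟨φ, hK, by simp [φ, MappingTorus.endOfPowEqConj], hinj, hindex, fun hcoHopf => ?_⟩
  have hφ_surj := (hcoHopf φ hinj ⟨by omega⟩).surjective
  rw [MonoidHom.range_eq_top_of_surjective φ hφ_surj, Subgroup.index_top] at hindex
  omega
end
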